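/- arXiv:1912.06781 — 7 statements merged into one kernel-verified Lean document; each statement's English description precedes it below -/
import Mathlib

section
/- Let p be a prime, u, m, n natural numbers with p ∤ u, m ≥ 2 if p = 2, and set k = 1 + u·p^m. Then the map Ξ : ℤ/p^nℤ → ℤ/p^nℤ sending the class of a non-negative integer i to the class of S(k,i) is a well-defined bijection. -/
/-!
Multiplying by `k - 1` turns `S(k, d)` into `k ^ d - 1`, whose `p`-adic valuation is
`v_p(k - 1) + v_p(d)` by lifting the exponent (for `p = 2` this needs `k ≡ 1 mod 4`);
hence `v_p(S(k, d)) = v_p(d)`. As `S(k, i + d) = S(k, i) + k ^ i S(k, d)` with `k` prime to `p`,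
this gives `S(k, i) ≡ S(k, j) mod p ^ n ↔ i ≡ j mod p ^ n`: the map is well defined and
injective, hence bijective on the finite ring `ZMod (p ^ n)`.
-/

/-- `S x i = 1 + x + ⋯ + x^(i-1)`, with `S x 0 = 0`. -/
def S (x i : ℕ) : ℕ := ∑ t ∈ Finset.range i, x ^ t

lemma S_one (i : ℕ) : S 1 i = i := by simp [S]

lemma S_add (x i d : ℕ) : S x (i + d) = S x i + x ^ i * S x d := by
  simp only [S, Finset.sum_range_add, Finset.mul_sum, pow_add]

lemma natCast_S_mul_sub_one {R : Type*} [CommRing R] (x d : ℕ) :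
    (S x d : R) * (x - 1) = x ^ d - 1 := by
  push_cast [S]
  exact geom_sum_mul _ _

lemma emultiplicity_pow_sub_one {p k : ℕ} (hp : p.Prime) (hpk : (p : ℤ) ∣ k - 1)
    (hk : ¬ (p : ℤ) ∣ k) (h2 : p = 2 → (4 : ℤ) ∣ k - 1) (d : ℕ) :
    emultiplicity (p : ℤ) ((k : ℤ) ^ d - 1) =
      emultiplicity (p : ℤ) (k - 1) + emultiplicity p d := by
  rcases hp.eq_two_or_odd' with rfl | hodd
  · simpa [← Int.natCast_emultiplicity] using Int.two_pow_sub_pow' d (h2 rfl) hk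
  · simpa using Int.emultiplicity_pow_sub_pow hp hodd hpk hk d

theorem emultiplicity_S {p k : ℕ} (hp : p.Prime) (hk : k ≡ 1 [MOD p])
    (hk2 : p = 2 → k ≡ 1 [MOD 4]) (d : ℕ) :
    emultiplicity p (S k d) = emultiplicity p d := by
  rcases eq_or_ne k 1 with rfl | hk1
  · rw [S_one]
  have hpk : (p : ℤ) ∣ k - 1 := Nat.modEq_iff_dvd.mp hk.symm
  have hndvd : ¬ (p : ℤ) ∣ k := fun h =>
    hp.not_dvd_one (Int.natCast_dvd_natCast.mp (by simpa using dvd_sub h hpk))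
  have hfin : emultiplicity (p : ℤ) (k - 1) ≠ ⊤ := by
    refine finiteMultiplicity_iff_emultiplicity_ne_top.mp
      (Int.finiteMultiplicity_iff.mpr ⟨?_, ?_⟩)
    · simpa using hp.ne_one
    · omega
  have hlte := emultiplicity_pow_sub_one hp hpk hndvd
    (fun h => Nat.modEq_iff_dvd.mp (hk2 h).symm) d
  rw [← natCast_S_mul_sub_one, emultiplicity_mul (Nat.prime_iff_prime_int.mp hp), add_comm,
    Int.natCast_emultiplicity] at hlte
  exact WithTop.add_left_cancel hfin hlte

theorem pow_dvd_S_iff {p k : ℕ} (hp : p.Prime) (hk : k ≡ 1 [MOD p])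
    (hk2 : p = 2 → k ≡ 1 [MOD 4]) (n d : ℕ) : p ^ n ∣ S k d ↔ p ^ n ∣ d := by
  rw [pow_dvd_iff_le_emultiplicity, pow_dvd_iff_le_emultiplicity,
    emultiplicity_S hp hk hk2]

theorem S_modEq_S_iff {q k : ℕ} (hqk : q.Coprime k) (hS : ∀ d, q ∣ S k d ↔ q ∣ d)
    (i j : ℕ) :
    S k i ≡ S k j [MOD q] ↔ i ≡ j [MOD q] := by
  wlog hij : i ≤ j generalizing i j
  · rw [Nat.ModEq.comm, this j i (by omega), Nat.ModEq.comm]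
  obtain ⟨d, rfl⟩ := Nat.exists_eq_add_of_le hij
  rw [Nat.ModEq.comm, S_add, Nat.add_modEq_left_iff, (hqk.pow_right i).dvd_mul_left, hS,
    Nat.ModEq.comm, Nat.add_modEq_left_iff]

theorem bijective_natCast_comp_val {q : ℕ} [NeZero q] {f : ℕ → ℕ}
    (hf : ∀ i j, f i ≡ f j [MOD q] ↔ i ≡ j [MOD q]) :
    Function.Bijective (fun z : ZMod q => (f z.val : ZMod q)) := by
  refine Finite.injective_iff_bijective.mp fun z w h => ?_
  rw [← ZMod.natCast_zmod_val z, ← ZMod.natCast_zmod_val w, ZMod.natCast_eq_natCast_iff, ← hf,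
    ← ZMod.natCast_eq_natCast_iff]
  exact h

theorem stmt_5_general (p u m n : ℕ) (hp : p.Prime) (hm : 0 < m)
    (hp2 : p = 2 → 2 ≤ m) (k : ℕ) (hk : k = 1 + u * p ^ m) :
    (∀ i j : ℕ, i ≡ j [MOD p ^ n] → S k i ≡ S k j [MOD p ^ n]) ∧
    Function.Bijective (fun z : ZMod (p ^ n) => ((S k z.val : ℕ) : ZMod (p ^ n))) := by
  have hk_modEq : ∀ q, q ∣ p ^ m → k ≡ 1 [MOD q] := fun q hq =>
    hk ▸ (Nat.modEq_zero_iff_dvd.mpr (hq.mul_left u)).add_left 1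
  have hkp : k ≡ 1 [MOD p] := hk_modEq p (dvd_pow_self p hm.ne')
  have hk4 : p = 2 → k ≡ 1 [MOD 4] := by
    rintro rfl
    exact hk_modEq 4 (pow_dvd_pow 2 (hp2 rfl))
  have hcop : (p ^ n).Coprime k :=
    Nat.Coprime.pow_left n (Nat.coprime_comm.mp (hkp.gcd_eq.trans (Nat.gcd_one_left p)))
  have hS := S_modEq_S_iff hcop (pow_dvd_S_iff hp hkp hk4 n)
  have : NeZero (p ^ n) := ⟨pow_ne_zero n hp.ne_zero⟩
  exact ⟨fun i j => (hS i j).mpr, bijective_natCast_comp_val hS⟩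

theorem stmt_5 (p u m n : ℕ) (hp : p.Prime) (hu : ¬ p ∣ u) (hm : 0 < m)
    (hp2 : p = 2 → 2 ≤ m) (hn : 0 < n) (k : ℕ) (hk : k = 1 + u * p ^ m) :
    (∀ i j : ℕ, i ≡ j [MOD p ^ n] → S k i ≡ S k j [MOD p ^ n]) ∧
    Function.Bijective (fun z : ZMod (p ^ n) => ((S k z.val : ℕ) : ZMod (p ^ n))) :=
  stmt_5_general p u m n hp hm hp2 k hk
end

section
/- Let p be a prime, u, m natural numbers with p ∤ u, m ≥ 2 if p = 2, n ≤ 2m − ε (ε = 1 if p = 2, else 0), and k = 1 + u·p^m. Then for all ℓ, i ≥ 0, S(k^ℓ, i) ≡ i + C(i,2)·ℓ·u·p^m (mod p^n), where C(i,2) is the binomial coefficient i choose 2. -/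
/-!
Since `n ≤ 2m`, the square of `p^m` vanishes modulo `p^n`, so the binomial theorem gives
`k^j ≡ 1 + j u p^m`. Summing this over `j = ℓ t` for `t < i` yields `i + (0 + 1 + ⋯ + (i - 1)) ℓ u p^m`,
and `0 + 1 + ⋯ + (i - 1) = C(i, 2)`.
-/

open Finset

lemma one_add_mul_pow_modEq {N q : ℕ} (hN : N ∣ q ^ 2) (c t : ℕ) :
    (1 + c * q) ^ t ≡ 1 + t * c * q [MOD N] := by
  have hsq : (N : ℤ) ∣ ((c * q : ℕ) : ℤ) ^ 2 := by
    exact_mod_cast hN.trans (pow_dvd_pow_of_dvd (dvd_mul_left q c) 2)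
  rw [Nat.modEq_iff_dvd]
  have h := hsq.trans (sq_dvd_add_pow_sub_sub ((c * q : ℕ) : ℤ) 1 t)
  exact h.neg_right.trans (dvd_of_eq (by push_cast; ring))

lemma S_modEq_of_pow_modEq {x d N : ℕ} (h : ∀ t, x ^ t ≡ 1 + t * d [MOD N]) (i : ℕ) :
    S x i ≡ i + i.choose 2 * d [MOD N] := by
  have hsum : ∑ t ∈ range i, (1 + t * d) = i + i.choose 2 * d := by
    rw [sum_add_distrib, ← sum_mul, sum_range_id, ← Nat.choose_two_right]
    simp
  rw [← hsum]
  exact (sum_nat_mod _ _ _).trans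
    ((congrArg (· % N) (sum_congr rfl fun t _ => h t)).trans (sum_nat_mod _ _ _).symm)

theorem stmt_8_general (p u m n : ℕ)
    (ε : ℕ) (hnm : n ≤ 2 * m - ε)
    (k : ℕ) (hk : k = 1 + u * p ^ m) (ℓ i : ℕ) :
    S (k ^ ℓ) i ≡ i + Nat.choose i 2 * ℓ * u * p ^ m [MOD p ^ n] := by
  have hN : p ^ n ∣ (p ^ m) ^ 2 := by
    rw [← pow_mul]
    exact pow_dvd_pow p (by omega)
  have hpow : ∀ t, (k ^ ℓ) ^ t ≡ 1 + t * (ℓ * u * p ^ m) [MOD p ^ n] := fun t => by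
    rw [← pow_mul, hk]
    convert one_add_mul_pow_modEq hN u (ℓ * t) using 2
    ring
  simpa only [mul_assoc] using S_modEq_of_pow_modEq hpow i

theorem stmt_8 (p u m n : ℕ) (hp : p.Prime) (hu : ¬ p ∣ u) (hm : 0 < m)
    (hp2 : p = 2 → 2 ≤ m)
    (ε : ℕ) (hε : ε = if p = 2 then 1 else 0) (hnm : n ≤ 2 * m - ε)
    (k : ℕ) (hk : k = 1 + u * p ^ m) (ℓ i : ℕ) :
    S (k ^ ℓ) i ≡ i + Nat.choose i 2 * ℓ * u * p ^ m [MOD p ^ n] :=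
  stmt_8_general p u m n ε hnm k hk ℓ i
end

section
/- Let p be a prime, u, m, n natural numbers with p ∤ u, m ≥ 2 if p = 2, and k = 1 + u·p^m. Let i ≥ 0 and suppose ĩ, k′ ∈ ℕ satisfy S(k, ĩ) ≡ i (mod p^n) and k·k′ ≡ 1 (mod p^n), with ĩ ≥ 1. Then S(k, ĩ − 1) − S(k, p^n − 1) ≡ k′·i (mod p^n). -/
/-!
Since `k ≡ 1 (mod p)`, the full period sum `S(k, p^n)` is divisible by `p^n`: it factors as
`S(k, p^(n-1)) · S(k^(p^(n-1)), p)`, and a sum of `p` powers of a number `≡ 1 (mod p)` is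
`≡ p ≡ 0 (mod p)`. Together with `S(k, j) = k · S(k, j - 1) + 1` this gives
`k · (S(k, ĩ - 1) - S(k, p^n - 1)) = S(k, ĩ) - S(k, p^n) ≡ i (mod p^n)`, and multiplying by the
inverse `k′` of `k` finishes the proof.
-/

open Finset

section GeomSum

theorem geom_sum_range_mul {R : Type*} [Semiring R] (x : R) (a b : ℕ) :
    ∑ i ∈ range (a * b), x ^ i = (∑ i ∈ range a, x ^ i) * ∑ i ∈ range b, (x ^ a) ^ i := by
  induction b with
  | zero => simp
  | succ b ih =>
    rw [Nat.mul_succ, sum_range_add, ih, sum_range_succ, mul_add, ← pow_mul]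
    simp only [add_comm (a * b), pow_add, ← sum_mul]

variable {R : Type*} [CommRing R]

theorem natCast_dvd_geom_sum_self {p : ℕ} {x : R} (hx : (p : R) ∣ x - 1) :
    (p : R) ∣ ∑ i ∈ range p, x ^ i := by
  simpa using dvd_geom_sum₂_self (y := (1 : R)) hx

theorem natCast_pow_dvd_geom_sum_pow {p : ℕ} {x : R} (hx : (p : R) ∣ x - 1) (n : ℕ) :
    (p : R) ^ n ∣ ∑ i ∈ range (p ^ n), x ^ i := by
  induction n with
  | zero => simp
  | succ n ih =>
    rw [pow_succ, pow_succ, geom_sum_range_mul]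
    refine mul_dvd_mul ih (natCast_dvd_geom_sum_self (hx.trans ?_))
    simpa using sub_dvd_pow_sub_pow x 1 (p ^ n)

theorem geom_sum_pred {x : R} {j : ℕ} (hj : 1 ≤ j) :
    ∑ i ∈ range j, x ^ i = x * ∑ i ∈ range (j - 1), x ^ i + 1 := by
  obtain ⟨j, rfl⟩ := Nat.exists_eq_add_of_le' hj
  exact geom_sum_succ

end GeomSum

theorem geom_sum_pred_sub_geom_sum_pred_modEq {N x x' i : ℤ} {a b : ℕ} (ha : 1 ≤ a) (hb : 1 ≤ b)
    (hxa : ∑ t ∈ range a, x ^ t ≡ i [ZMOD N]) (hxb : ∑ t ∈ range b, x ^ t ≡ 0 [ZMOD N])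
    (hx : x * x' ≡ 1 [ZMOD N]) :
    ∑ t ∈ range (a - 1), x ^ t - ∑ t ∈ range (b - 1), x ^ t ≡ x' * i [ZMOD N] := by
  set A := ∑ t ∈ range (a - 1), x ^ t
  set B := ∑ t ∈ range (b - 1), x ^ t
  have hmul : x * (A - B) ≡ i [ZMOD N] := by
    have h := hxa.sub hxb
    rwa [geom_sum_pred ha, geom_sum_pred hb, sub_zero, add_sub_add_right_eq_sub,
      ← mul_sub] at h
  calc A - B = 1 * (A - B) := (one_mul _).symm
    _ ≡ x * x' * (A - B) [ZMOD N] := (hx.mul_right _).symm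
    _ = x' * (x * (A - B)) := by ring
    _ ≡ x' * i [ZMOD N] := hmul.mul_left _

theorem stmt_9_general (p u m n : ℕ) (hp : p.Prime) (hm : 0 < m)
    (k : ℕ) (hk : k = 1 + u * p ^ m)
    (i itil k' : ℕ) (hitil : 1 ≤ itil)
    (h1 : S k itil ≡ i [MOD p ^ n]) (h2 : k * k' ≡ 1 [MOD p ^ n]) :
    Int.ModEq ((p : ℤ) ^ n) ((S k (itil - 1) : ℤ) - (S k (p ^ n - 1) : ℤ)) ((k' : ℤ) * (i : ℤ)) := by
  have hk1 : (p : ℤ) ∣ (k : ℤ) - 1 := by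
    simpa [hk] using (dvd_pow_self (p : ℤ) hm.ne').mul_left (u : ℤ)
  have hperiod : ∑ t ∈ range (p ^ n), (k : ℤ) ^ t ≡ 0 [ZMOD (p : ℤ) ^ n] :=
    Int.modEq_zero_iff_dvd.mpr (natCast_pow_dvd_geom_sum_pow hk1 n)
  have h1' := Int.natCast_modEq_iff.mpr h1
  have h2' := Int.natCast_modEq_iff.mpr h2
  push_cast [S] at h1' h2' ⊢
  exact geom_sum_pred_sub_geom_sum_pred_modEq hitil (Nat.one_le_pow _ _ hp.pos) h1' hperiod h2'

theorem stmt_9 (p u m n : ℕ) (hp : p.Prime) (hu : ¬ p ∣ u) (hm : 0 < m)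
    (hp2 : p = 2 → 2 ≤ m) (k : ℕ) (hk : k = 1 + u * p ^ m)
    (i itil k' : ℕ) (hitil : 1 ≤ itil)
    (h1 : S k itil ≡ i [MOD p ^ n]) (h2 : k * k' ≡ 1 [MOD p ^ n]) :
    Int.ModEq ((p : ℤ) ^ n) ((S k (itil - 1) : ℤ) - (S k (p ^ n - 1) : ℤ)) ((k' : ℤ) * (i : ℤ)) :=
  stmt_9_general p u m n hp hm k hk i itil k' hitil h1 h2
end

section
/- For any group G, the normalizer of the image ρ(G) of the right regular representation in the symmetric group Perm(G) equals the holomorph Hol(G), i.e., the subgroup generated by ρ(G) together with the permutations of G induced by automorphisms of G. -/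
/-- The right regular representation `ρ : G →* Perm G`, `ρ(σ)(x) = x * σ⁻¹`. -/
def rho (G : Type*) [Group G] : G →* Equiv.Perm G where
  toFun g := Equiv.mulRight g⁻¹
  map_one' := by ext x; simp
  map_mul' g h := by ext x; simp [mul_assoc]

/-- The holomorph of `G`, the subgroup of `Perm G` generated by `ρ(G)` and the
permutations induced by automorphisms of `G`. -/
def Hol (G : Type*) [Group G] : Subgroup (Equiv.Perm G) :=
  (rho G).range ⊔ (MulAut.toPerm G).range

/-!
An automorphism `φ` conjugates `ρ(g)` to `ρ(φ g)`, so `Hol G` normalizes `ρ(G)`. Conversely, if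
`π` normalizes `ρ(G)`, then so does `τ = ρ(π 1) * π`, which fixes `1`. Conjugating `ρ(y⁻¹)` by `τ`
gives some `ρ(k⁻¹)`, i.e. `τ (x * y) = τ x * k` for all `x`; taking `x = 1` shows `k = τ y`, so `τ`
is an automorphism and `π = ρ(π 1)⁻¹ * τ ∈ Hol G`.
-/

namespace Hol

variable {G : Type*} [Group G]

@[simp]
lemma rho_apply (g x : G) : rho G g x = x * g⁻¹ := rfl

lemma conj_toPerm_rho (φ : MulAut G) (g : G) :
    MulAut.conj (MulAut.toPerm G φ) (rho G g) = rho G (φ g) := by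
  ext x
  show φ (φ.symm x * g⁻¹) = x * (φ g)⁻¹
  simp

lemma toPerm_mem_normalizer_rho_range (φ : MulAut G) :
    MulAut.toPerm G φ ∈ Subgroup.normalizer ((rho G).range : Set (Equiv.Perm G)) := by
  rw [Subgroup.mem_normalizer_iff_conj_image_eq, MonoidHom.coe_range, ← Set.range_comp]
  have : ⇑(MulAut.conj (MulAut.toPerm G φ)) ∘ rho G = rho G ∘ φ :=
    funext (conj_toPerm_rho φ)
  rw [this, EquivLike.range_comp]

lemma map_mul_of_mem_normalizer_rho_range {τ : Equiv.Perm G}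
    (hτ : τ ∈ Subgroup.normalizer ((rho G).range : Set (Equiv.Perm G))) (hτ1 : τ 1 = 1)
    (x y : G) : τ (x * y) = τ x * τ y := by
  obtain ⟨k, hk⟩ := (Subgroup.mem_normalizer_iff.1 hτ (rho G y⁻¹)).1 ⟨y⁻¹, rfl⟩
  have hmul_right (z : G) : τ (z * y) = τ z * k⁻¹ := by
    simpa [-map_inv] using congrArg (fun σ : Equiv.Perm G => σ (τ z)) hk.symm
  have hτy : τ y = k⁻¹ := by simpa [hτ1] using hmul_right 1
  rw [hmul_right, hτy]

lemma exists_toPerm_eq_of_mem_normalizer_rho_range {τ : Equiv.Perm G}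
    (hτ : τ ∈ Subgroup.normalizer ((rho G).range : Set (Equiv.Perm G))) (hτ1 : τ 1 = 1) :
    ∃ φ : MulAut G, MulAut.toPerm G φ = τ :=
  ⟨{ τ with map_mul' := map_mul_of_mem_normalizer_rho_range hτ hτ1 }, rfl⟩

end Hol

open Hol in
theorem stmt_12 (G : Type*) [Group G] :
    Subgroup.normalizer ((rho G).range : Set (Equiv.Perm G)) = Hol G := by
  refine le_antisymm (fun π hπ => ?_) ?_
  · set τ := rho G (π 1) * π
    have hτ : τ ∈ Subgroup.normalizer ((rho G).range : Set (Equiv.Perm G)) :=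
      Subgroup.mul_mem _ (Subgroup.le_normalizer ⟨π 1, rfl⟩) hπ
    have hτ1 : τ 1 = 1 := by simp [τ]
    obtain ⟨φ, hφ⟩ := exists_toPerm_eq_of_mem_normalizer_rho_range hτ hτ1
    have hπ_eq : π = rho G (π 1)⁻¹ * MulAut.toPerm G φ := by
      rw [hφ, map_inv, inv_mul_cancel_left]
    rw [hπ_eq]
    exact Subgroup.mul_mem _ (Subgroup.mem_sup_left ⟨_, rfl⟩) (Subgroup.mem_sup_right ⟨φ, rfl⟩)
  · refine sup_le Subgroup.le_normalizer ?_
    rintro _ ⟨φ, rfl⟩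
    exact toPerm_mem_normalizer_rho_range φ
end

section
/- Let G = A ⋊ ⟨τ⟩ where ⟨τ⟩ is cyclic of order p^n for a prime p, conjugation by τ on A is the automorphism ψ, and ψ has order dividing p^m with m ≤ n (and m ≥ 2 if p = 2). Set k = 1 + u·p^m with p ∤ u, and define π : G → G by π(a·τ^i) = a·τ^{S(k,i)} for a ∈ A and i ≥ 0. Then for every b ∈ A, π commutes with ρ(b) in Perm(G), where ρ is the right regular representation. -/
/-- The map `π` on `G = A ⋊ C_{N}` sending `a·τ^i` to `a·τ^{S(k,i)}`, where
`τ` is the canonical generator of the cyclic factor. -/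
def piMap (A : Type*) [Group A] (N : ℕ)
    (φ : Multiplicative (ZMod N) →* MulAut A) (k : ℕ) :
    (A ⋊[φ] Multiplicative (ZMod N)) → (A ⋊[φ] Multiplicative (ZMod N)) :=
  fun g => ⟨g.left, Multiplicative.ofAdd ((S k (Multiplicative.toAdd g.right).val : ℕ) : ZMod N)⟩

/-!
Write `x = a·τ^i`. Both `π(x·b⁻¹)` and `π(x)·b⁻¹` have cyclic part `τ^{S(k,i)}`; their `A`-parts are
`a·ψ^i(b⁻¹)` and `a·ψ^{S(k,i)}(b⁻¹)`. These agree because `k ≡ 1 (mod p^m)` gives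
`S(k,i) ≡ i (mod p^m)`, and `ψ^{p^m} = 1`.
-/

lemma S_modEq_self {k q : ℕ} (hk : k ≡ 1 [MOD q]) (i : ℕ) : S k i ≡ i [MOD q] := by
  induction i with
  | zero => rfl
  | succ i ih =>
    rw [S, Finset.sum_range_succ, ← S]
    simpa using ih.add (by simpa using hk.pow i)

namespace SemidirectProduct

variable {A H : Type*} [Group A] [Group H] {φ : H →* MulAut A}

lemma mk_left_mul_inl_of_map_eq {F : H → H} (hF : ∀ h, φ (F h) = φ h)
    (x : A ⋊[φ] H) (c : A) :
    (⟨(x * inl c).left, F (x * inl c).right⟩ : A ⋊[φ] H) = ⟨x.left, F x.right⟩ * inl c := by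
  ext <;> simp [hF]

end SemidirectProduct

namespace MonoidHom

variable {M : Type*} [Monoid M] {N : ℕ}

lemma map_ofAdd_natCast (f : Multiplicative (ZMod N) →* M) (j : ℕ) :
    f (.ofAdd (j : ZMod N)) = f (.ofAdd 1) ^ j := by
  rw [← map_pow, ← ofAdd_nsmul, nsmul_one]

lemma map_ofAdd_natCast_eq_of_modEq (f : Multiplicative (ZMod N) →* M) {q a b : ℕ}
    (hq : f (.ofAdd 1) ^ q = 1) (hab : a ≡ b [MOD q]) :
    f (.ofAdd (a : ZMod N)) = f (.ofAdd (b : ZMod N)) := by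
  rw [map_ofAdd_natCast, map_ofAdd_natCast, pow_eq_pow_of_modEq hab hq]

end MonoidHom

theorem stmt_15_general (p u m n : ℕ) (hp : p.Prime)
    (k : ℕ) (hk : k = 1 + u * p ^ m)
    (A : Type*) [Group A] (φ : Multiplicative (ZMod (p ^ n)) →* MulAut A)
    (hψ : (φ (Multiplicative.ofAdd 1)) ^ (p ^ m) = 1) :
    ∀ b : A, ∀ x : A ⋊[φ] Multiplicative (ZMod (p ^ n)),
      piMap A (p ^ n) φ k (x * (SemidirectProduct.inl b)⁻¹)
        = piMap A (p ^ n) φ k x * (SemidirectProduct.inl b)⁻¹ := by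
  have : NeZero (p ^ n) := ⟨pow_ne_zero n hp.ne_zero⟩
  have hk₁ : k ≡ 1 [MOD p ^ m] := by
    rw [hk, Nat.ModEq, Nat.add_mul_mod_self_right]
  have hπ : ∀ t, φ (.ofAdd ((S k (Multiplicative.toAdd t).val : ℕ) : ZMod (p ^ n))) = φ t := by
    intro t
    conv_rhs => rw [← ofAdd_toAdd t, ← ZMod.natCast_zmod_val (Multiplicative.toAdd t)]
    exact φ.map_ofAdd_natCast_eq_of_modEq hψ (S_modEq_self hk₁ _)
  intro b x
  rw [← map_inv]
  exact SemidirectProduct.mk_left_mul_inl_of_map_eq hπ x b⁻¹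

theorem stmt_15 (p u m n : ℕ) (hp : p.Prime) (hu : ¬ p ∣ u) (hm : 0 < m)
    (hp2 : p = 2 → 2 ≤ m) (hmn : m ≤ n) (hn : 0 < n)
    (k : ℕ) (hk : k = 1 + u * p ^ m)
    (A : Type*) [Group A] (φ : Multiplicative (ZMod (p ^ n)) →* MulAut A)
    (hψ : (φ (Multiplicative.ofAdd 1)) ^ (p ^ m) = 1) :
    ∀ b : A, ∀ x : A ⋊[φ] Multiplicative (ZMod (p ^ n)),
      piMap A (p ^ n) φ k (x * (SemidirectProduct.inl b)⁻¹)
        = piMap A (p ^ n) φ k x * (SemidirectProduct.inl b)⁻¹ :=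
  stmt_15_general p u m n hp k hk A φ hψ
end

section
/- Let G = A ⋊ ⟨τ⟩ with A abelian and ⟨τ⟩ cyclic of order p^n (p prime), with conjugation action ψ ∈ Aut(A) of order p^y. Suppose θ ∈ Aut(G) satisfies θ(A) = A, θ(τ) = c·τ^t with c ∈ A and t ∈ ℤ, and ψ commutes with θ|_A in Aut(A). Then ψ^{t−1} = Id_A, and in particular t ≡ 1 (mod p^y). -/
/-!
Conjugation by `τ` on `A` is `ψ`. Applying `θ` to `τ a τ⁻¹ = ψ a` and using that `θ` commutes
with `ψ` on `A`, while `θ τ = c τ^t` conjugates `A` by `ψ^t` (the factor `c` acts trivially since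
`A` is abelian), gives `ψ^t = ψ` on `θ(A) = A`. Hence `ψ^(t-1) = 1`, so the order `p^y` of `ψ`
divides `t - 1`.
-/

open SemidirectProduct

namespace SemidirectProduct

variable {N G : Type*} [CommGroup N] [Group G] {φ : G →* MulAut N}

theorem inl_conj_mul_inr (c b : N) (g : G) :
    (inl c * inr g : N ⋊[φ] G) * inl b * (inl c * inr g)⁻¹ = inl (φ g b) := by
  calc (inl c * inr g : N ⋊[φ] G) * inl b * (inl c * inr g)⁻¹
      = inl c * (inr g * inl b * inr g⁻¹) * (inl c)⁻¹ := by rw [map_inv]; group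
    _ = inl (c * φ g b * c⁻¹) := by rw [← inl_aut, ← map_inv, ← map_mul, ← map_mul]
    _ = inl (φ g b) := by rw [mul_inv_cancel_comm]

theorem zpow_eq_self_of_mulAut_inr_eq (θ : MulAut (N ⋊[φ] G))
    (hsurj : ∀ b : N, ∃ a : N, θ (inl a) = inl b)
    {g : G} (hcomm : ∀ a b : N, θ (inl a) = inl b → θ (inl (φ g a)) = inl (φ g b))
    {c : N} {t : ℤ} (hθg : θ (inr g) = inl c * inr g ^ t) :
    φ g ^ t = φ g := by
  ext b
  obtain ⟨a, ha⟩ := hsurj b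
  have hconj : θ (inl (φ g a)) = inl ((φ g ^ t) b) := by
    rw [inl_aut, map_mul, map_mul, map_inv inr, map_inv θ, hθg, ha, ← map_zpow, ← map_zpow,
      inl_conj_mul_inr, map_zpow]
  exact inl_injective (hconj.symm.trans (hcomm a b ha))

end SemidirectProduct

theorem stmt_17_general (p n y : ℕ)
    (A : Type*) [CommGroup A]
    (φ : Multiplicative (ZMod (p ^ n)) →* MulAut A)
    (hy : orderOf (φ (Multiplicative.ofAdd 1)) = p ^ y)
    (θ : MulAut (A ⋊[φ] Multiplicative (ZMod (p ^ n))))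
    (hθA : ∀ g : A ⋊[φ] Multiplicative (ZMod (p ^ n)),
      (∃ a : A, g = SemidirectProduct.inl a) ↔ (∃ a : A, θ g = SemidirectProduct.inl a))
    (hcomm : ∀ a b : A, θ (SemidirectProduct.inl a) = SemidirectProduct.inl b →
      θ (SemidirectProduct.inl ((φ (Multiplicative.ofAdd 1)) a))
        = SemidirectProduct.inl ((φ (Multiplicative.ofAdd 1)) b))
    (c : A) (t : ℤ)
    (hθτ : θ (SemidirectProduct.inr (Multiplicative.ofAdd 1))
      = SemidirectProduct.inl c * (SemidirectProduct.inr (Multiplicative.ofAdd 1)) ^ t) :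
    (φ (Multiplicative.ofAdd 1)) ^ (t - 1) = 1 ∧ t ≡ 1 [ZMOD ((p : ℤ) ^ y)] := by
  have hsurj (b : A) : ∃ a, θ (inl a) = inl b := by
    obtain ⟨a, ha⟩ := (hθA (θ.symm (inl b))).mpr ⟨b, θ.apply_symm_apply _⟩
    exact ⟨a, by rw [← ha, θ.apply_symm_apply]⟩
  have hψ : φ (Multiplicative.ofAdd 1) ^ (t - 1) = 1 := by
    rw [zpow_sub_one, zpow_eq_self_of_mulAut_inr_eq θ hsurj hcomm hθτ, mul_inv_cancel]
  refine ⟨hψ, (Int.modEq_iff_dvd.mpr ?_).symm⟩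
  exact_mod_cast hy ▸ orderOf_dvd_iff_zpow_eq_one.mpr hψ

theorem stmt_17 (p n y : ℕ) (hp : p.Prime)
    (A : Type*) [CommGroup A]
    (φ : Multiplicative (ZMod (p ^ n)) →* MulAut A)
    (hy : orderOf (φ (Multiplicative.ofAdd 1)) = p ^ y)
    (θ : MulAut (A ⋊[φ] Multiplicative (ZMod (p ^ n))))
    (hθA : ∀ g : A ⋊[φ] Multiplicative (ZMod (p ^ n)),
      (∃ a : A, g = SemidirectProduct.inl a) ↔ (∃ a : A, θ g = SemidirectProduct.inl a))
    (hcomm : ∀ a b : A, θ (SemidirectProduct.inl a) = SemidirectProduct.inl b →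
      θ (SemidirectProduct.inl ((φ (Multiplicative.ofAdd 1)) a))
        = SemidirectProduct.inl ((φ (Multiplicative.ofAdd 1)) b))
    (c : A) (t : ℤ)
    (hθτ : θ (SemidirectProduct.inr (Multiplicative.ofAdd 1))
      = SemidirectProduct.inl c * (SemidirectProduct.inr (Multiplicative.ofAdd 1)) ^ t) :
    (φ (Multiplicative.ofAdd 1)) ^ (t - 1) = 1 ∧ t ≡ 1 [ZMOD ((p : ℤ) ^ y)] :=
  stmt_17_general p n y A φ hy θ hθA hcomm c t hθτ
end

section
/- Let G = A ⋊ ⟨τ⟩ with ⟨τ⟩ cyclic of order p^n (p prime), and suppose A has finite exponent coprime to p, the conjugation action ψ of τ on A has order dividing p^m with m ≤ n, and θ ∈ Aut(G) satisfies θ(τ) = c·τ^t with c ∈ A. Then c·ψ^t(c)·ψ^{2t}(c)⋯ψ^{(p^m−1)t}(c) = 1. -/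
/-!
Write `ψ` for the action of `τ` on `A`. Expanding `(c τ^t)^N` in the semidirect product gives
`inl (c · ψ^t(c) ⋯ ψ^{(N-1)t}(c)) * inr (τ^{tN})`. Since `θ(τ) = c τ^t` has order dividing `p^n`,
the product of the first `p^n` factors is trivial. The factors are periodic with period `p^m`, so
that product is the `p^{n-m}`-th power of the product `P` of the first `p^m` factors; as the
exponent of `A` is coprime to `p`, `P = 1`.
-/

open SemidirectProduct

theorem SemidirectProduct.inl_mul_inr_pow {N G : Type*} [Group N] [Group G] {φ : G →* MulAut N}
    (a : N) (g : G) (k : ℕ) :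
    (inl a * inr g : N ⋊[φ] G) ^ k
      = inl ((List.range k).map fun j => (φ g ^ j) a).prod * inr (g ^ k) := by
  induction k with
  | zero => simp
  | succ k ih =>
    rw [pow_succ, ih]
    ext <;> simp [List.range_succ, pow_succ, -map_pow, map_pow φ]

theorem List.prod_range_mul_eq_pow_of_periodic {M : Type*} [Monoid M] {f : ℕ → M} {k : ℕ}
    (hf : Function.Periodic f k) (q : ℕ) :
    ((List.range (k * q)).map f).prod = ((List.range k).map f).prod ^ q := by
  induction q with
  | zero => simp
  | succ q ih =>
    rw [Nat.mul_succ, List.range_add, List.map_append, List.prod_append, ih, pow_succ,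
      List.map_map]
    congr 2
    refine List.map_congr_left fun j _ => ?_
    simpa [add_comm, mul_comm] using hf.nat_mul q j

theorem eq_one_of_pow_eq_one_of_coprime_exponent {G : Type*} [Monoid G] {x : G} {k : ℕ}
    (hcop : (Monoid.exponent G).Coprime k) (hx : x ^ k = 1) : x = 1 := by
  simpa [hcop.gcd_eq_one] using pow_gcd_eq_one.mpr ⟨Monoid.pow_exponent_eq_one x, hx⟩

theorem stmt_18_general (p m n : ℕ) (hmn : m ≤ n)
    (A : Type*) [Group A]
    (hcop : Nat.Coprime (Monoid.exponent A) p)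
    (φ : Multiplicative (ZMod (p ^ n)) →* MulAut A)
    (hψ : (φ (Multiplicative.ofAdd 1)) ^ (p ^ m) = 1)
    (θ : MulAut (A ⋊[φ] Multiplicative (ZMod (p ^ n))))
    (c : A) (t : ℤ)
    (hθτ : θ (SemidirectProduct.inr (Multiplicative.ofAdd 1))
      = SemidirectProduct.inl c * (SemidirectProduct.inr (Multiplicative.ofAdd 1)) ^ t) :
    ((List.range (p ^ m)).map (fun j => ((φ (Multiplicative.ofAdd 1)) ^ ((j : ℤ) * t)) c)).prod
      = 1 := by
  set τ : Multiplicative (ZMod (p ^ n)) := Multiplicative.ofAdd 1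
  set f : ℕ → A := fun j => (φ τ ^ ((j : ℤ) * t)) c
  -- the cast `(j : ℤ)` makes the statement map over the coerced list `(List.range (p ^ m) : List ℤ)`
  suffices ((List.range (p ^ m)).map f).prod = 1 by
    simp only [List.pure_def, List.bind_eq_flatMap, ← List.map_eq_flatMap, List.map_map]
    exact this
  have hτ : τ ^ p ^ n = 1 := by
    rw [← ofAdd_nsmul, nsmul_one, ZMod.natCast_self, ofAdd_zero]
  have hf : Function.Periodic f (p ^ m) := fun j => by
    simp only [f]
    rw [Nat.cast_add, add_mul, zpow_add, zpow_mul (φ τ) ((p ^ m : ℕ) : ℤ), zpow_natCast, hψ,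
      one_zpow, mul_one]
  have hfull : ((List.range (p ^ n)).map f).prod = 1 := by
    have h := congrArg SemidirectProduct.left <| calc
      (inl c * inr (τ ^ t) : A ⋊[φ] _) ^ p ^ n = θ (inr (τ ^ p ^ n)) := by
        rw [map_zpow, ← hθτ, map_pow, map_pow]
      _ = 1 := by rw [hτ, map_one, map_one]
    rw [inl_mul_inr_pow, mul_left, left_inl, right_inl, left_inr, map_one, mul_one] at h
    simpa [f, ← zpow_natCast, ← zpow_mul, mul_comm t] using h
  rw [← Nat.add_sub_cancel' hmn, pow_add, List.prod_range_mul_eq_pow_of_periodic hf] at hfull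
  exact eq_one_of_pow_eq_one_of_coprime_exponent (hcop.pow_right _) hfull

theorem stmt_18 (p m n : ℕ) (hp : p.Prime) (hmn : m ≤ n)
    (A : Type*) [Group A]
    (hexp : Monoid.exponent A ≠ 0) (hcop : Nat.Coprime (Monoid.exponent A) p)
    (φ : Multiplicative (ZMod (p ^ n)) →* MulAut A)
    (hψ : (φ (Multiplicative.ofAdd 1)) ^ (p ^ m) = 1)
    (θ : MulAut (A ⋊[φ] Multiplicative (ZMod (p ^ n))))
    (c : A) (t : ℤ)
    (hθτ : θ (SemidirectProduct.inr (Multiplicative.ofAdd 1))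
      = SemidirectProduct.inl c * (SemidirectProduct.inr (Multiplicative.ofAdd 1)) ^ t) :
    ((List.range (p ^ m)).map (fun j => ((φ (Multiplicative.ofAdd 1)) ^ ((j : ℤ) * t)) c)).prod
      = 1 :=
  stmt_18_general p m n hmn A hcop φ hψ θ c t hθτ
end
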